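/- There exists a finite constant C such that for every nonzero y ∈ ℝ², every α > 0, and every i ∈ ℤ, the Lebesgue measure of the set {x ∈ ℝ² : |x₁y₂ − x₂y₁| ≤ α and 2^{i−1} ≤ ‖x‖ < 2^i} is at most C α 2^{i} ‖y‖^{-1}. -/

import Mathlib

open MeasureTheory Set

/-!
The linear map `x ↦ (x₁y₂ - x₂y₁, ⟪x, y⟫)` is `‖y‖` times a rotation, so its determinant is `‖y‖²`.
By Cauchy–Schwarz it sends `{x | |x₁y₂ - x₂y₁| ≤ α, ‖x‖ ≤ R}` into the box
`[-α, α] × [-R‖y‖, R‖y‖]` of area `4αR‖y‖`; pulling the box back divides its area by `‖y‖²`.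
-/

theorem EuclideanSpace.volume_setOf_forall_abs_le {ι : Type*} [Fintype ι] (a : ι → ℝ) :
    volume {u : EuclideanSpace ℝ ι | ∀ j, |u j| ≤ a j} = ∏ j, ENNReal.ofReal (2 * a j) := by
  have hbox : {u : EuclideanSpace ℝ ι | ∀ j, |u j| ≤ a j} =
      (MeasurableEquiv.toLp 2 (ι → ℝ)).symm ⁻¹' univ.pi fun j => Icc (-a j) (a j) := by
    ext u
    simp only [mem_ofPred_eq, mem_preimage, MeasurableEquiv.coe_toLp_symm, mem_univ_pi, mem_Icc,
      abs_le]
  rw [hbox, (EuclideanSpace.volume_preserving_symm_measurableEquiv_toLp ι).measure_preimage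
    (MeasurableSet.univ_pi fun _ => measurableSet_Icc).nullMeasurableSet, volume_pi_pi]
  simp only [Real.volume_Icc, sub_neg_eq_add, two_mul]

noncomputable def crossInnerMap (y : EuclideanSpace ℝ (Fin 2)) :
    EuclideanSpace ℝ (Fin 2) →ₗ[ℝ] EuclideanSpace ℝ (Fin 2) :=
  Matrix.toEuclideanLin !![y 1, -y 0; y 0, y 1]

theorem crossInnerMap_apply_zero (x y : EuclideanSpace ℝ (Fin 2)) :
    crossInnerMap y x 0 = x 0 * y 1 - x 1 * y 0 := by
  simp [crossInnerMap, Matrix.mulVec, dotProduct]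
  ring

theorem crossInnerMap_apply_one (x y : EuclideanSpace ℝ (Fin 2)) :
    crossInnerMap y x 1 = inner ℝ x y := by
  simp [crossInnerMap, Matrix.mulVec, dotProduct, PiLp.inner_apply, mul_comm]

theorem det_crossInnerMap (y : EuclideanSpace ℝ (Fin 2)) :
    LinearMap.det (crossInnerMap y) = ‖y‖ ^ 2 := by
  rw [crossInnerMap, Matrix.toEuclideanLin_eq_toLin_orthonormal, LinearMap.det_toLin,
    Matrix.det_fin_two_of, EuclideanSpace.norm_sq_eq, Fin.sum_univ_two]
  simp only [Real.norm_eq_abs, sq_abs]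
  ring

theorem volume_abs_cross_le_and_norm_le_le {y : EuclideanSpace ℝ (Fin 2)} (hy : y ≠ 0)
    (α : ℝ) {R : ℝ} (hR : 0 ≤ R) :
    volume {x : EuclideanSpace ℝ (Fin 2) | |x 0 * y 1 - x 1 * y 0| ≤ α ∧ ‖x‖ ≤ R}
      ≤ ENNReal.ofReal (4 * α * R * ‖y‖⁻¹) := by
  have hy_pos : 0 < ‖y‖ := norm_pos_iff.2 hy
  let a : Fin 2 → ℝ := ![α, R * ‖y‖]
  have hsub : {x : EuclideanSpace ℝ (Fin 2) | |x 0 * y 1 - x 1 * y 0| ≤ α ∧ ‖x‖ ≤ R}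
      ⊆ crossInnerMap y ⁻¹' {u | ∀ j, |u j| ≤ a j} := by
    rintro x ⟨hcross, hx⟩
    simp only [mem_preimage, mem_ofPred_eq, Fin.forall_fin_two, crossInnerMap_apply_zero,
      crossInnerMap_apply_one]
    refine ⟨hcross, ?_⟩
    calc |inner ℝ x y| ≤ ‖x‖ * ‖y‖ := abs_real_inner_le_norm x y
      _ ≤ R * ‖y‖ := by gcongr
  have hdet : LinearMap.det (crossInnerMap y) ≠ 0 := by
    rw [det_crossInnerMap]; positivity
  calc _ ≤ volume (crossInnerMap y ⁻¹' {u | ∀ j, |u j| ≤ a j}) := measure_mono hsub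
    _ = ENNReal.ofReal |(‖y‖ ^ 2)⁻¹| *
          (ENNReal.ofReal (2 * α) * ENNReal.ofReal (2 * (R * ‖y‖))) := by
      rw [Measure.addHaar_preimage_linearMap _ hdet, det_crossInnerMap,
        EuclideanSpace.volume_setOf_forall_abs_le, Fin.prod_univ_two]
      rfl
    _ = ENNReal.ofReal (4 * α * R * ‖y‖⁻¹) := by
      rw [mul_comm (ENNReal.ofReal (2 * α)), ← ENNReal.ofReal_mul (by positivity),
        ← ENNReal.ofReal_mul (by positivity), abs_of_pos (by positivity)]
      congr 1
      field_simp
      ring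

theorem statement14 :
    ∃ C : ℝ, 0 ≤ C ∧ ∀ y : EuclideanSpace ℝ (Fin 2), y ≠ 0 → ∀ α : ℝ, 0 < α → ∀ i : ℤ,
      volume {x : EuclideanSpace ℝ (Fin 2) |
          |x 0 * y 1 - x 1 * y 0| ≤ α ∧ (2 : ℝ) ^ (i - 1) ≤ ‖x‖ ∧ ‖x‖ < (2 : ℝ) ^ i}
        ≤ ENNReal.ofReal (C * α * (2 : ℝ) ^ i * ‖y‖⁻¹) := by
  refine ⟨4, by norm_num, fun y hy α _ i => ?_⟩
  refine (measure_mono fun x hx => ?_).trans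
    (volume_abs_cross_le_and_norm_le_le hy α (zpow_nonneg zero_le_two i))
  exact ⟨hx.1, hx.2.2.le⟩
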